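/- For every g ∈ C_c^∞(ℝ) that vanishes in a neighborhood of 0 and whose support is contained in {v ∈ ℝ : b̃(v) ≠ 0}, the following integration-by-parts identity holds: π_H(g'') = π_{G(H)}(g') − Σ_{i=2}^N π_{G_i(H)}((g ∘ Δ_i^1)'). -/

import Mathlib

open MeasureTheory Set

noncomputable section

/-- The house-of-cards jump map `Δ_i`: coordinate `i` is reset to `0`, coordinate `j ≠ i`
is moved to `x^j + a_i^j(x^j)`. -/
def jmap (N : ℕ) (aij : Fin N → Fin N → ℝ → ℝ) (i : Fin N) (x : Fin N → ℝ) : Fin N → ℝ :=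
  fun j => if j = i then 0 else x j + aij i j (x j)

/-- The coordinatewise flow `γ_t(x) = (γ̃_t(x^1),…,γ̃_t(x^N))`. -/
def flowN (N : ℕ) (γt : ℝ → ℝ → ℝ) (t : ℝ) (x : Fin N → ℝ) : Fin N → ℝ :=
  fun j => γt t (x j)

/-- The survival factor `e(x,t) = exp(-∫_0^t f̄(γ_s(x)) ds)`. -/
def surv (N : ℕ) (γt : ℝ → ℝ → ℝ) (f : Fin N → ℝ → ℝ) (x : Fin N → ℝ) (t : ℝ) : ℝ :=
  Real.exp (-∫ s in (0:ℝ)..t, ∑ i, f i (γt s (x i)))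

/-- `π_H(h) = Σ_i ∫ f_i(x^i) ∫_0^∞ e(Δ_i(x),t) H(γ_t(Δ_i(x))) h(γ̃_t(Δ_i^1(x^1))) dt m(dx)`,
where `i1` denotes the first coordinate. -/
def piH (N : ℕ) (γt : ℝ → ℝ → ℝ) (f : Fin N → ℝ → ℝ) (aij : Fin N → Fin N → ℝ → ℝ)
    (i1 : Fin N) (m : Measure (Fin N → ℝ)) (H : (Fin N → ℝ) → ℝ) (h : ℝ → ℝ) : ℝ :=
  ∑ i, ∫ x, (f i (x i) *
    ∫ t in Ioi (0:ℝ),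
      surv N γt f (jmap N aij i x) t * H (flowN N γt t (jmap N aij i x)) *
        h (γt t (jmap N aij i x i1))) ∂m


/-!
For `u(z) = H(z) · (g' / b̃)(z¹)` the function `t ↦ e(y,t) u(γ_t y)` has derivative
`e(y,t) (L u)(γ_t y)`, where `L u = ⟨∇u, b⟩ - f̄ u` generates the flow killed at rate `f̄`, and a
direct computation gives `L u = H · g''(·¹) - G(H) · g'(·¹)`. As `e(y,t) → 0`, integrating over
`t > 0` (Dynkin's formula) inside every term of `π` yields
`π_H(g'') - π_{G(H)}(g') = -Σᵢ ∫ fᵢ(xⁱ) u(Δᵢ x) m(dx)`.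
The term `i = 1` vanishes because `Δ₁(x)¹ = 0` and `g' = 0` near `0`; by the representation
identity for `m`, each other term is again a `π`, namely `π_{Gᵢ(H)}((g ∘ Δᵢ¹)')`.

All time integrals converge by an occupation-time bound: a trajectory of `γ̃` is either stationary
or injective, so by the change of variables `v = γ̃_t(w)` it spends time at most
`|supp g| / min_{supp g} |b̃|` in the support of `g`.
-/

open Filter Topology Function

/-! ### Flows of a Lipschitz drift -/

structure IsFlow (b : ℝ → ℝ) (γ : ℝ → ℝ → ℝ) : Prop where
  zero : ∀ v, γ 0 v = v
  hasDerivAt : ∀ v t, 0 ≤ t → HasDerivAt (γ · v) (b (γ t v)) t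

/-- Freezing the flow at negative times makes it jointly continuous, hence integrals along it
measurable in the initial point. -/
def clampFlow (γ : ℝ → ℝ → ℝ) (t v : ℝ) : ℝ := γ (max t 0) v

theorem clampFlow_of_nonneg (γ : ℝ → ℝ → ℝ) {t : ℝ} (ht : 0 ≤ t) (v : ℝ) :
    clampFlow γ t v = γ t v := by
  rw [clampFlow, max_eq_left ht]

namespace IsFlow

variable {b : ℝ → ℝ} {γ : ℝ → ℝ → ℝ} {K : NNReal} {B : ℝ}

theorem continuousOn (hγ : IsFlow b γ) (v : ℝ) : ContinuousOn (γ · v) (Ici 0) :=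
  fun t ht => (hγ.hasDerivAt v t ht).continuousAt.continuousWithinAt

theorem continuous_clampFlow (hγ : IsFlow b γ) (v : ℝ) : Continuous (clampFlow γ · v) :=
  (hγ.continuousOn v).comp_continuous (continuous_id.max continuous_const)
    fun t => le_max_right t 0

theorem hasDerivAt_clampFlow (hγ : IsFlow b γ) (v : ℝ) {t : ℝ} (ht : 0 < t) :
    HasDerivAt (clampFlow γ · v) (b (clampFlow γ t v)) t := by
  rw [clampFlow_of_nonneg γ ht.le]
  exact (hγ.hasDerivAt v t ht.le).congr_of_eventuallyEq <|
    eventually_of_mem (Ioi_mem_nhds ht) fun s hs => clampFlow_of_nonneg γ (le_of_lt hs) v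

theorem dist_le (hγ : IsFlow b γ) (hb : LipschitzWith K b) (u v : ℝ) {t : ℝ} (ht : 0 ≤ t) :
    dist (γ t u) (γ t v) ≤ dist u v * Real.exp (K * t) := by
  simpa [hγ.zero] using dist_le_of_trajectories_ODE (v := fun _ => b) (fun _ => hb)
    ((hγ.continuousOn u).mono Icc_subset_Ici_self)
    (fun s hs => (hγ.hasDerivAt u s hs.1).hasDerivWithinAt)
    ((hγ.continuousOn v).mono Icc_subset_Ici_self)
    (fun s hs => (hγ.hasDerivAt v s hs.1).hasDerivWithinAt)
    (le_refl (dist (γ 0 u) (γ 0 v))) t ⟨ht, le_rfl⟩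

theorem dist_time_le (hγ : IsFlow b γ) (hB : ∀ v, |b v| ≤ B) (v : ℝ) {s t : ℝ}
    (hs : 0 ≤ s) (ht : 0 ≤ t) : dist (γ s v) (γ t v) ≤ B * dist s t :=
  (convex_Ici 0).norm_image_sub_le_of_norm_hasDerivWithin_le
    (fun r hr => (hγ.hasDerivAt v r hr).hasDerivWithinAt) (fun _ _ => hB _) ht hs

theorem continuous_uncurry_clampFlow (hγ : IsFlow b γ) (hb : LipschitzWith K b)
    (hB : ∀ v, |b v| ≤ B) : Continuous (uncurry (clampFlow γ)) := by
  refine continuous_prod_of_continuous_lipschitzWith _ B.toNNReal (fun t => ?_) fun v => ?_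
  · refine (LipschitzWith.of_dist_le' (K := Real.exp (K * max t 0)) fun u w => ?_).continuous
    rw [mul_comm]
    exact hγ.dist_le hb u w (le_max_right t 0)
  · refine LipschitzWith.of_dist_le' fun s t => ?_
    calc dist (clampFlow γ s v) (clampFlow γ t v) ≤ B * dist (max s 0) (max t 0) :=
          hγ.dist_time_le hB v (le_max_right s 0) (le_max_right t 0)
      _ ≤ B * dist s t :=
          mul_le_mul_of_nonneg_left (abs_max_sub_max_le_abs s t 0) ((abs_nonneg _).trans (hB 0))

theorem eq_of_drift_eq_zero (hγ : IsFlow b γ) (hb : LipschitzWith K b) {w : ℝ}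
    (hw : b w = 0) {t : ℝ} (ht : 0 ≤ t) : γ t w = w :=
  ODE_solution_unique (v := fun _ => b) (fun _ => hb)
    ((hγ.continuousOn w).mono Icc_subset_Ici_self)
    (fun s hs => (hγ.hasDerivAt w s hs.1).hasDerivWithinAt) continuousOn_const
    (fun s _ => by simpa [hw] using (hasDerivAt_const s w).hasDerivWithinAt)
    (hγ.zero w) ⟨ht, le_rfl⟩

/-- Backward uniqueness: a trajectory reaching a zero of the drift was constant. -/
theorem drift_ne_zero (hγ : IsFlow b γ) (hb : LipschitzWith K b) {w : ℝ} (hw : b w ≠ 0)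
    {t : ℝ} (ht : 0 ≤ t) : b (γ t w) ≠ 0 := by
  intro hzero
  have hconst := ODE_solution_unique_of_mem_Icc_left (v := fun _ => b) (s := fun _ => univ)
    (fun _ _ => hb.lipschitzOnWith) ((hγ.continuousOn w).mono Icc_subset_Ici_self)
    (fun s hs => (hγ.hasDerivAt w s hs.1.le).hasDerivWithinAt) (fun _ _ => trivial)
    continuousOn_const
    (fun s _ => by simpa [hzero] using (hasDerivAt_const s (γ t w)).hasDerivWithinAt)
    (fun _ _ => trivial) rfl ⟨le_rfl, ht⟩
  have hw_eq : w = γ t w := by simpa only [hγ.zero] using hconst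
  exact hw (hw_eq ▸ hzero)

/-- By Rolle's theorem, a repeated value would force the drift to vanish on the trajectory. -/
theorem injOn (hγ : IsFlow b γ) (hb : LipschitzWith K b) {w : ℝ} (hw : b w ≠ 0) :
    InjOn (γ · w) (Ici 0) := by
  suffices ∀ s ∈ Ici (0 : ℝ), ∀ t ∈ Ici (0 : ℝ), s < t → γ s w ≠ γ t w by
    intro s hs t ht hst
    by_contra hne
    rcases lt_or_gt_of_ne hne with h | h
    exacts [this s hs t ht h hst, this t ht s hs h hst.symm]
  intro s hs t _ hst heq
  obtain ⟨r, hr, hr0⟩ := exists_hasDerivAt_eq_zero hst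
    ((hγ.continuousOn w).mono fun r hr => hs.trans hr.1) heq
    fun r hr => hγ.hasDerivAt w r (hs.trans hr.1.le)
  exact hγ.drift_ne_zero hb hw (hs.trans hr.1.le) hr0

theorem measurableSet_setOf_mem (hγ : IsFlow b γ) {S : Set ℝ} (hS : MeasurableSet S)
    (w : ℝ) : MeasurableSet {t ∈ Ioi (0 : ℝ) | γ t w ∈ S} := by
  have hA : {t ∈ Ioi (0 : ℝ) | γ t w ∈ S} = Ioi 0 ∩ (clampFlow γ · w) ⁻¹' S := by
    ext t
    simp +contextual [clampFlow_of_nonneg γ (le_of_lt _)]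
  rw [hA]
  exact measurableSet_Ioi.inter (hS.preimage (hγ.continuous_clampFlow w).measurable)

theorem volume_setOf_mem_le (hγ : IsFlow b γ) (hb : LipschitzWith K b) {S : Set ℝ}
    (hS : MeasurableSet S) {c : ℝ} (hbS : ∀ v ∈ S, c ≤ |b v|) (hc : 0 < c) (w : ℝ) :
    ENNReal.ofReal c * volume {t ∈ Ioi (0 : ℝ) | γ t w ∈ S} ≤ volume S := by
  set A := {t ∈ Ioi (0 : ℝ) | γ t w ∈ S}
  by_cases hw : b w = 0
  · suffices A = ∅ by simp [this]
    refine eq_empty_of_forall_notMem fun t ⟨ht, htS⟩ => ?_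
    rw [hγ.eq_of_drift_eq_zero hb hw (le_of_lt ht)] at htS
    linarith [hbS w htS, abs_eq_zero.2 hw]
  have hA : MeasurableSet A := hγ.measurableSet_setOf_mem hS w
  have hchange := lintegral_image_eq_lintegral_abs_deriv_mul hA
    (fun t ht => (hγ.hasDerivAt w t (le_of_lt ht.1)).hasDerivWithinAt)
    ((hγ.injOn hb hw).mono fun t (ht : t ∈ A) => mem_Ici.2 (le_of_lt ht.1)) 1
  calc ENNReal.ofReal c * volume A = ∫⁻ _ in A, ENNReal.ofReal c :=
        (setLIntegral_const A _).symm
    _ ≤ ∫⁻ t in A, ENNReal.ofReal |b (γ t w)| * 1 := by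
        refine setLIntegral_mono' hA fun t ht => ?_
        rw [mul_one]
        exact ENNReal.ofReal_le_ofReal (hbS _ ht.2)
    _ = volume ((γ · w) '' A) := by simpa using hchange.symm
    _ ≤ volume S := measure_mono (image_subset_iff.2 fun t ht => ht.2)

theorem measureReal_setOf_mem_le (hγ : IsFlow b γ) (hb : LipschitzWith K b) {S : Set ℝ}
    (hS : MeasurableSet S) (hSfin : volume S ≠ ⊤) {c : ℝ} (hbS : ∀ v ∈ S, c ≤ |b v|)
    (hc : 0 < c) (w : ℝ) :
    volume.real {t ∈ Ioi (0 : ℝ) | γ t w ∈ S} ≤ volume.real S / c := by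
  rw [le_div_iff₀ hc, mul_comm]
  have h := ENNReal.toReal_mono hSfin (hγ.volume_setOf_mem_le hb hS hbS hc w)
  rwa [ENNReal.toReal_mul, ENNReal.toReal_ofReal hc.le] at h

theorem integrable_indicator_setOf_mem (hγ : IsFlow b γ) (hb : LipschitzWith K b)
    {S : Set ℝ} (hS : MeasurableSet S) (hSfin : volume S ≠ ⊤) {c : ℝ}
    (hbS : ∀ v ∈ S, c ≤ |b v|) (hc : 0 < c) (w C : ℝ) :
    Integrable ({t ∈ Ioi (0 : ℝ) | γ t w ∈ S}.indicator fun _ => C) := by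
  refine (integrableOn_const (C := C) fun htop => ?_).integrable_indicator
    (hγ.measurableSet_setOf_mem hS w)
  have h := hγ.volume_setOf_mem_le hb hS hbS hc w
  rw [htop, ENNReal.mul_top (ENNReal.ofReal_pos.2 hc).ne'] at h
  exact hSfin (top_le_iff.1 h)

end IsFlow

/-! ### Calculus of `p / b` -/

theorem deriv_eq_zero_of_notMem_tsupport {p : ℝ → ℝ} {v : ℝ} (hv : v ∉ tsupport p) :
    deriv p v = 0 :=
  notMem_support.1 fun h => hv (support_deriv_subset h)

/-- The formula also holds where `b = 0`, both sides being `0` there (with `x / 0 = 0`). -/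
theorem hasDerivAt_div_of_tsupport_subset {p b : ℝ → ℝ} (hp : Differentiable ℝ p)
    (hb : Differentiable ℝ b) (hsupp : tsupport p ⊆ {v | b v ≠ 0}) (v : ℝ) :
    HasDerivAt (fun w => p w / b w) ((deriv p v - p v / b v * deriv b v) / b v) v := by
  by_cases hbv : b v = 0
  · have hv : v ∉ tsupport p := fun h => hsupp h hbv
    rw [hbv, div_zero]
    refine (hasDerivAt_const v 0).congr_of_eventuallyEq ?_
    filter_upwards [(isClosed_tsupport p).isOpen_compl.mem_nhds hv] with w hw
    rw [image_eq_zero_of_notMem_tsupport hw, zero_div]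
  · refine ((hp v).hasDerivAt.div (hb v).hasDerivAt hbv).congr_deriv ?_
    field_simp

theorem continuous_div_of_tsupport_subset {p b : ℝ → ℝ} (hp : Differentiable ℝ p)
    (hb : Differentiable ℝ b) (hsupp : tsupport p ⊆ {v | b v ≠ 0}) :
    Continuous fun v => p v / b v :=
  continuous_iff_continuousAt.2 fun v =>
    (hasDerivAt_div_of_tsupport_subset hp hb hsupp v).continuousAt

theorem HasCompactSupport.exists_abs_div_le {p b : ℝ → ℝ} (hpc : HasCompactSupport p)
    (hc : Continuous fun v => p v / b v) : ∃ C, ∀ v, |p v / b v| ≤ C :=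
  (HasCompactSupport.intro hpc.isCompact fun v hv => by
    rw [image_eq_zero_of_notMem_tsupport hv, zero_div]).exists_bound_of_continuous hc

theorem div_mul_deriv_comp {g Δ b : ℝ → ℝ} {v : ℝ} (hg : DifferentiableAt ℝ g (Δ v))
    (hΔ : DifferentiableAt ℝ Δ v) (hΔ' : deriv Δ v ≠ 0) (c : ℝ) :
    c / (b (Δ v) * deriv Δ v) * deriv (fun w => g (Δ w)) v =
      c * (deriv g (Δ v) / b (Δ v)) := by
  rw [show (fun w => g (Δ w)) = g ∘ Δ from rfl, deriv_comp v hg hΔ]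
  by_cases hb : b (Δ v) = 0
  · simp [hb]
  · field_simp

theorem lipschitzWith_toNNReal_of_abs_deriv_le {b : ℝ → ℝ} {B : ℝ} (hb : Differentiable ℝ b)
    (hB : ∀ v, |deriv b v| ≤ B) : LipschitzWith B.toNNReal b :=
  LipschitzWith.of_dist_le' fun v w => convex_univ.norm_image_sub_le_of_norm_deriv_le
    (fun x _ => hb x) (fun x _ => hB x) (mem_univ w) (mem_univ v)

/-! ### The resolvent of the killed flow -/

theorem jmap_self {N : ℕ} (aij : Fin N → Fin N → ℝ → ℝ) (i : Fin N) (x : Fin N → ℝ) :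
    jmap N aij i x i = 0 :=
  if_pos rfl

theorem jmap_of_ne {N : ℕ} (aij : Fin N → Fin N → ℝ → ℝ) {i j : Fin N} (h : j ≠ i)
    (x : Fin N → ℝ) : jmap N aij i x j = x j + aij i j (x j) :=
  if_neg h

theorem continuous_jmap {N : ℕ} {aij : Fin N → Fin N → ℝ → ℝ} {i : Fin N}
    (ha : ∀ j, j ≠ i → Continuous (aij i j)) : Continuous (jmap N aij i) := by
  refine continuous_pi fun j => ?_
  by_cases h : j = i
  · simp only [jmap, if_pos h, continuous_const]
  · simp only [jmap, if_neg h]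
    exact (continuous_apply j).add ((ha j h).comp (continuous_apply j))

section Resolvent

variable {N : ℕ} {b : ℝ → ℝ} {γ Γ : ℝ → ℝ → ℝ} {K : NNReal} {B : ℝ} {f : Fin N → ℝ → ℝ}
  {y : Fin N → ℝ} {t : ℝ}

def killedResolvent (N : ℕ) (γ : ℝ → ℝ → ℝ) (f : Fin N → ℝ → ℝ) (φ : (Fin N → ℝ) → ℝ)
    (y : Fin N → ℝ) : ℝ :=
  ∫ t in Ioi 0, surv N γ f y t * φ (flowN N γ t y)

def killedGenerator (b : ℝ → ℝ) (f : Fin N → ℝ → ℝ) (u : (Fin N → ℝ) → ℝ)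
    (z : Fin N → ℝ) : ℝ :=
  fderiv ℝ u z (fun j => b (z j)) - (∑ i, f i (z i)) * u z

theorem piH_eq_sum_integral_killedResolvent (aij : Fin N → Fin N → ℝ → ℝ) (i1 : Fin N)
    (m : Measure (Fin N → ℝ)) (Q : (Fin N → ℝ) → ℝ) (h : ℝ → ℝ) :
    piH N γ f aij i1 m Q h = ∑ i, ∫ x, f i (x i) *
      killedResolvent N γ f (fun z => Q z * h (z i1)) (jmap N aij i x) ∂m := by
  simp only [piH, killedResolvent, flowN, mul_assoc]

theorem surv_pos : 0 < surv N γ f y t := Real.exp_pos _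

theorem surv_le_one (hf : ∀ i v, 0 ≤ f i v) (ht : 0 ≤ t) : surv N γ f y t ≤ 1 :=
  Real.exp_le_one_iff.2 <| neg_nonpos.2 <|
    intervalIntegral.integral_nonneg ht fun _ _ => Finset.sum_nonneg fun i _ => hf i _

theorem surv_clampFlow (ht : 0 ≤ t) : surv N (clampFlow γ) f y t = surv N γ f y t := by
  refine congrArg (fun r => Real.exp (-r)) (intervalIntegral.integral_congr fun s hs => ?_)
  rw [uIcc_of_le ht] at hs
  simp only [clampFlow_of_nonneg γ hs.1]

theorem flowN_clampFlow (ht : 0 ≤ t) : flowN N (clampFlow γ) t y = flowN N γ t y := by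
  funext j
  exact clampFlow_of_nonneg γ ht (y j)

theorem killedResolvent_clampFlow (φ : (Fin N → ℝ) → ℝ) :
    killedResolvent N (clampFlow γ) f φ = killedResolvent N γ f φ :=
  funext fun _ => setIntegral_congr_fun measurableSet_Ioi fun _ ht => by
    rw [surv_clampFlow (le_of_lt ht), flowN_clampFlow (le_of_lt ht)]

theorem hasDerivAt_surv (hΓ : ∀ v, Continuous (Γ · v)) (hf : ∀ i, Continuous (f i))
    (y : Fin N → ℝ) (t : ℝ) :
    HasDerivAt (surv N Γ f y) (surv N Γ f y t * -∑ i, f i (Γ t (y i))) t :=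
  ((continuous_finsetSum _ fun i _ => (hf i).comp (hΓ (y i))).integral_hasStrictDerivAt 0 t
    |>.hasDerivAt.neg.exp)

theorem continuous_uncurry_surv (hΓ : Continuous (uncurry Γ)) (hf : ∀ i, Continuous (f i)) :
    Continuous fun p : (Fin N → ℝ) × ℝ => surv N Γ f p.1 p.2 := by
  refine (intervalIntegral.continuous_parametric_intervalIntegral_of_continuous
    (f := fun (p : (Fin N → ℝ) × ℝ) s => ∑ i, f i (Γ s (p.1 i))) ?_ continuous_snd).neg.rexp
  exact continuous_finsetSum _ fun i _ => (hf i).comp <| hΓ.comp <|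
    continuous_snd.prodMk ((continuous_apply i).comp (continuous_fst.comp continuous_fst))

theorem continuous_uncurry_flowN (hΓ : Continuous (uncurry Γ)) :
    Continuous fun p : (Fin N → ℝ) × ℝ => flowN N Γ p.2 p.1 :=
  continuous_pi fun j =>
    hΓ.comp (continuous_snd.prodMk ((continuous_apply j).comp continuous_fst))

theorem tendsto_surv_atTop (hγ : IsFlow b γ) (hf : ∀ i, Continuous (f i))
    (hf0 : ∀ i v, 0 ≤ f i v)
    (hdiv : ∫⁻ s in Ioi (0 : ℝ), ENNReal.ofReal (∑ i, f i (γ s (y i))) = ⊤) :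
    Tendsto (surv N γ f y) atTop (𝓝 0) := by
  set F : ℝ → ℝ := fun s => ∑ i, f i (γ s (y i))
  have hF : ContinuousOn F (Ici 0) :=
    continuousOn_finsetSum _ fun i _ => (hf i).comp_continuousOn (hγ.continuousOn (y i))
  have hlin : ∀ t : ℝ, 0 ≤ t →
      ENNReal.ofReal (∫ s in (0 : ℝ)..t, F s) = ∫⁻ s in Iic t, ENNReal.ofReal (F s)
        ∂volume.restrict (Ioi 0) := by
    intro t ht
    rw [Measure.restrict_restrict measurableSet_Iic, Iic_inter_Ioi,
      intervalIntegral.integral_of_le ht]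
    exact ofReal_integral_eq_lintegral_ofReal
      ((hF.mono Icc_subset_Ici_self).integrableOn_Icc.mono_set Ioc_subset_Icc_self)
      (ae_of_all _ fun s => Finset.sum_nonneg fun i _ => hf0 i _)
  have hlim : Tendsto (fun t => ∫⁻ s in Iic t, ENNReal.ofReal (F s) ∂volume.restrict (Ioi 0))
      atTop (𝓝 ⊤) := by
    rw [← hdiv]
    exact (aecover_Iic tendsto_id).lintegral_tendsto_of_countably_generated
      ((hF.mono fun _ h => le_of_lt h).aemeasurable measurableSet_Ioi).ennreal_ofReal
  have hprim : Tendsto (fun t => ∫ s in (0 : ℝ)..t, F s) atTop atTop :=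
    ENNReal.tendsto_ofReal_nhds_top.1 <| hlim.congr' <|
      (eventually_ge_atTop 0).mono fun t ht => (hlin t ht).symm
  exact Real.tendsto_exp_atBot.comp (tendsto_neg_atTop_atBot.comp hprim)

theorem measurable_killedResolvent (hγ : IsFlow b γ) (hb : LipschitzWith K b)
    (hB : ∀ v, |b v| ≤ B) (hf : ∀ i, Continuous (f i)) {φ : (Fin N → ℝ) → ℝ}
    (hφ : Measurable φ) : Measurable (killedResolvent N γ f φ) := by
  rw [← killedResolvent_clampFlow]
  have hΓ := hγ.continuous_uncurry_clampFlow hb hB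
  exact ((continuous_uncurry_surv hΓ hf).measurable.mul
    (hφ.comp (continuous_uncurry_flowN hΓ).measurable)).stronglyMeasurable.integral_prod_right'
    |>.measurable

theorem aestronglyMeasurable_surv_mul (hγ : IsFlow b γ) (hf : ∀ i, Continuous (f i))
    {φ : (Fin N → ℝ) → ℝ} (hφ : Measurable φ) (y : Fin N → ℝ) :
    AEStronglyMeasurable (fun t => surv N γ f y t * φ (flowN N γ t y))
      (volume.restrict (Ioi 0)) := by
  have hsurv : Continuous (surv N (clampFlow γ) f y) := continuous_iff_continuousAt.2 fun t =>
    (hasDerivAt_surv hγ.continuous_clampFlow hf y t).continuousAt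
  have hflow : Continuous fun t => flowN N (clampFlow γ) t y :=
    continuous_pi fun j => hγ.continuous_clampFlow (y j)
  refine (hsurv.measurable.mul (hφ.comp hflow.measurable)).aestronglyMeasurable.congr ?_
  refine (ae_restrict_iff' measurableSet_Ioi).2 (ae_of_all _ fun t ht => ?_)
  change surv N (clampFlow γ) f y t * φ (flowN N (clampFlow γ) t y) = _
  rw [surv_clampFlow (le_of_lt ht), flowN_clampFlow (le_of_lt ht)]

theorem abs_surv_mul_le_indicator (hf0 : ∀ i v, 0 ≤ f i v) {S : Set ℝ} {i1 : Fin N}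
    {φ : (Fin N → ℝ) → ℝ} {C : ℝ} (hφC : ∀ z, |φ z| ≤ C) (hφS : ∀ z, z i1 ∉ S → φ z = 0)
    (y : Fin N → ℝ) (ht : 0 < t) :
    |surv N γ f y t * φ (flowN N γ t y)| ≤
      {t ∈ Ioi (0 : ℝ) | γ t (y i1) ∈ S}.indicator (fun _ => C) t := by
  by_cases hmem : γ t (y i1) ∈ S
  · rw [indicator_of_mem (show t ∈ {t ∈ Ioi (0 : ℝ) | γ t (y i1) ∈ S} from ⟨ht, hmem⟩),
      abs_mul, abs_of_pos surv_pos]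
    exact (mul_le_of_le_one_left (abs_nonneg _) (surv_le_one hf0 ht.le)).trans (hφC _)
  · rw [hφS _ hmem, mul_zero, abs_zero]
    exact indicator_nonneg (fun _ _ => (abs_nonneg _).trans (hφC y)) t

theorem integrableOn_surv_mul (hγ : IsFlow b γ) (hb : LipschitzWith K b)
    (hf : ∀ i, Continuous (f i)) (hf0 : ∀ i v, 0 ≤ f i v) {S : Set ℝ} (hS : MeasurableSet S)
    (hSfin : volume S ≠ ⊤) {c : ℝ} (hbS : ∀ v ∈ S, c ≤ |b v|) (hc : 0 < c) {i1 : Fin N}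
    {φ : (Fin N → ℝ) → ℝ} (hφ : Measurable φ) {C : ℝ} (hφC : ∀ z, |φ z| ≤ C)
    (hφS : ∀ z, z i1 ∉ S → φ z = 0) (y : Fin N → ℝ) :
    IntegrableOn (fun t => surv N γ f y t * φ (flowN N γ t y)) (Ioi 0) :=
  ((hγ.integrable_indicator_setOf_mem hb hS hSfin hbS hc (y i1) C).restrict).mono'
    (aestronglyMeasurable_surv_mul hγ hf hφ y) <|
    (ae_restrict_iff' measurableSet_Ioi).2 <| ae_of_all _ fun _ ht =>
      abs_surv_mul_le_indicator hf0 hφC hφS y ht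

theorem abs_killedResolvent_le (hγ : IsFlow b γ) (hb : LipschitzWith K b)
    (hf0 : ∀ i v, 0 ≤ f i v) {S : Set ℝ} (hS : MeasurableSet S) (hSfin : volume S ≠ ⊤)
    {c : ℝ} (hbS : ∀ v ∈ S, c ≤ |b v|) (hc : 0 < c) {i1 : Fin N} {φ : (Fin N → ℝ) → ℝ}
    {C : ℝ} (hφC : ∀ z, |φ z| ≤ C) (hφS : ∀ z, z i1 ∉ S → φ z = 0) (y : Fin N → ℝ) :
    |killedResolvent N γ f φ y| ≤ C * (volume.real S / c) := by
  set A := {t ∈ Ioi (0 : ℝ) | γ t (y i1) ∈ S}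
  have hA : MeasurableSet A := hγ.measurableSet_setOf_mem hS (y i1)
  calc |killedResolvent N γ f φ y| = ‖∫ t in Ioi 0, surv N γ f y t * φ (flowN N γ t y)‖ :=
        (Real.norm_eq_abs _).symm
    _ ≤ ∫ t in Ioi 0, A.indicator (fun _ => C) t :=
        norm_integral_le_of_norm_le
          (hγ.integrable_indicator_setOf_mem hb hS hSfin hbS hc (y i1) C).restrict <|
          (ae_restrict_iff' measurableSet_Ioi).2 <| ae_of_all _ fun _ ht =>
            abs_surv_mul_le_indicator hf0 hφC hφS y ht
    _ = C * volume.real A := by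
        rw [integral_indicator_const C hA, measureReal_restrict_apply hA,
          inter_eq_self_of_subset_left (sep_subset _ _), smul_eq_mul, mul_comm]
    _ ≤ C * (volume.real S / c) :=
        mul_le_mul_of_nonneg_left (hγ.measureReal_setOf_mem_le hb hS hSfin hbS hc _)
          ((abs_nonneg _).trans (hφC y))

theorem integrable_mul_killedResolvent_jmap (hγ : IsFlow b γ) (hb : LipschitzWith K b)
    (hB : ∀ v, |b v| ≤ B) (hf : ∀ i, Continuous (f i)) (hf0 : ∀ i v, 0 ≤ f i v) {F : ℝ}
    (hfF : ∀ i v, |f i v| ≤ F) {S : Set ℝ} (hS : MeasurableSet S) (hSfin : volume S ≠ ⊤)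
    {c : ℝ} (hbS : ∀ v ∈ S, c ≤ |b v|) (hc : 0 < c) {i1 : Fin N} {φ : (Fin N → ℝ) → ℝ}
    (hφ : Measurable φ) {C : ℝ} (hφC : ∀ z, |φ z| ≤ C) (hφS : ∀ z, z i1 ∉ S → φ z = 0)
    (m : Measure (Fin N → ℝ)) [IsFiniteMeasure m] {aij : Fin N → Fin N → ℝ → ℝ} {i : Fin N}
    (haij : Measurable (jmap N aij i)) :
    Integrable (fun x => f i (x i) * killedResolvent N γ f φ (jmap N aij i x)) m := by
  refine Integrable.of_bound ((((hf i).measurable.comp (measurable_pi_apply i)).mul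
    ((measurable_killedResolvent hγ hb hB hf hφ).comp haij)).aestronglyMeasurable)
    (F * (C * (volume.real S / c))) (ae_of_all _ fun x => ?_)
  rw [Real.norm_eq_abs, abs_mul]
  exact mul_le_mul (hfF i _) (abs_killedResolvent_le hγ hb hf0 hS hSfin hbS hc hφC hφS _)
    (abs_nonneg _) ((abs_nonneg _).trans (hfF i 0))

theorem killedResolvent_killedGenerator (hγ : IsFlow b γ) (hf : ∀ i, Continuous (f i))
    (hf0 : ∀ i v, 0 ≤ f i v)
    (hdiv : ∫⁻ s in Ioi (0 : ℝ), ENNReal.ofReal (∑ i, f i (γ s (y i))) = ⊤)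
    {u : (Fin N → ℝ) → ℝ} (hu : Differentiable ℝ u) {C : ℝ} (huC : ∀ z, |u z| ≤ C)
    (hint : IntegrableOn (fun t => surv N γ f y t * killedGenerator b f u (flowN N γ t y))
      (Ioi 0)) :
    killedResolvent N γ f (killedGenerator b f u) y = -u y := by
  set Γ := clampFlow γ
  set U : ℝ → ℝ := fun t => surv N Γ f y t * u (flowN N Γ t y)
  have hflow : ∀ t, 0 < t →
      HasDerivAt (fun s => flowN N Γ s y) (fun j => b (Γ t (y j))) t := fun t ht =>
    hasDerivAt_pi.2 fun j => hγ.hasDerivAt_clampFlow (y j) ht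
  have hU : ∀ t ∈ Ioi (0 : ℝ),
      HasDerivAt U (surv N Γ f y t * killedGenerator b f u (flowN N Γ t y)) t := by
    intro t ht
    refine ((hasDerivAt_surv hγ.continuous_clampFlow hf y t).mul
      ((hu _).hasFDerivAt.comp_hasDerivAt t (hflow t ht))).congr_deriv ?_
    simp only [killedGenerator, flowN, Function.comp_apply]
    ring
  have hUcont : Continuous U :=
    (continuous_iff_continuousAt.2 fun t =>
      (hasDerivAt_surv hγ.continuous_clampFlow hf y t).continuousAt).mul
      (hu.continuous.comp (continuous_pi fun j => hγ.continuous_clampFlow (y j)))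
  have hsurv : Tendsto (surv N Γ f y) atTop (𝓝 0) :=
    (tendsto_surv_atTop hγ hf hf0 hdiv).congr' <|
      (eventually_ge_atTop 0).mono fun t ht => (surv_clampFlow ht).symm
  have hUlim : Tendsto U atTop (𝓝 0) := by
    refine squeeze_zero_norm (fun t => ?_) (by simpa using hsurv.mul_const C)
    rw [Real.norm_eq_abs, abs_mul, abs_of_pos surv_pos]
    exact mul_le_mul_of_nonneg_left (huC _) surv_pos.le
  have hU0 : U 0 = u y := by
    simp only [U, surv, intervalIntegral.integral_same, neg_zero, Real.exp_zero, one_mul]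
    congr 1
    funext j
    exact (clampFlow_of_nonneg γ le_rfl _).trans (hγ.zero _)
  have hintΓ : IntegrableOn
      (fun t => surv N Γ f y t * killedGenerator b f u (flowN N Γ t y)) (Ioi 0) :=
    hint.congr_fun (fun t ht => by
      rw [surv_clampFlow (le_of_lt ht), flowN_clampFlow (le_of_lt ht)]) measurableSet_Ioi
  rw [← killedResolvent_clampFlow, killedResolvent, integral_Ioi_of_hasDerivAt_of_tendsto
    hUcont.continuousWithinAt hU hintΓ hUlim, hU0, zero_sub]

theorem piH_sub_piH_eq_neg_sum_integral (hγ : IsFlow b γ) (hb : LipschitzWith K b)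
    (hB : ∀ v, |b v| ≤ B) (hf : ∀ i, Continuous (f i)) (hf0 : ∀ i v, 0 ≤ f i v) {F : ℝ}
    (hfF : ∀ i v, |f i v| ≤ F)
    (hdiv : ∀ y : Fin N → ℝ, ∫⁻ s in Ioi (0 : ℝ), ENNReal.ofReal (∑ i, f i (γ s (y i))) = ⊤)
    {aij : Fin N → Fin N → ℝ → ℝ} (haij : ∀ i, Measurable (jmap N aij i)) (i1 : Fin N)
    (m : Measure (Fin N → ℝ)) [IsFiniteMeasure m] {S : Set ℝ} (hS : MeasurableSet S)
    (hSfin : volume S ≠ ⊤) {c : ℝ} (hbS : ∀ v ∈ S, c ≤ |b v|) (hc : 0 < c)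
    {Q₁ Q₂ : (Fin N → ℝ) → ℝ} {h₁ h₂ : ℝ → ℝ} (hm₁ : Measurable fun z => Q₁ z * h₁ (z i1))
    (hm₂ : Measurable fun z => Q₂ z * h₂ (z i1)) {C₁ C₂ : ℝ}
    (hC₁ : ∀ z, |Q₁ z * h₁ (z i1)| ≤ C₁) (hC₂ : ∀ z, |Q₂ z * h₂ (z i1)| ≤ C₂)
    (hS₁ : ∀ v ∉ S, h₁ v = 0) (hS₂ : ∀ v ∉ S, h₂ v = 0) {u : (Fin N → ℝ) → ℝ}
    (hu : Differentiable ℝ u) {Cu : ℝ} (huC : ∀ z, |u z| ≤ Cu)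
    (hLu : ∀ z, killedGenerator b f u z = Q₁ z * h₁ (z i1) - Q₂ z * h₂ (z i1)) :
    piH N γ f aij i1 m Q₁ h₁ - piH N γ f aij i1 m Q₂ h₂ =
      -∑ i, ∫ x, f i (x i) * u (jmap N aij i x) ∂m := by
  have hφS₁ : ∀ z : Fin N → ℝ, z i1 ∉ S → Q₁ z * h₁ (z i1) = 0 := fun z hz => by
    rw [hS₁ _ hz, mul_zero]
  have hφS₂ : ∀ z : Fin N → ℝ, z i1 ∉ S → Q₂ z * h₂ (z i1) = 0 := fun z hz => by
    rw [hS₂ _ hz, mul_zero]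
  have hdynkin : ∀ y, killedResolvent N γ f (fun z => Q₁ z * h₁ (z i1)) y -
      killedResolvent N γ f (fun z => Q₂ z * h₂ (z i1)) y = -u y := by
    intro y
    have hi₁ := integrableOn_surv_mul hγ hb hf hf0 hS hSfin hbS hc hm₁ hC₁ hφS₁ y
    have hi₂ := integrableOn_surv_mul hγ hb hf hf0 hS hSfin hbS hc hm₂ hC₂ hφS₂ y
    have hsub : ∀ t, surv N γ f y t * killedGenerator b f u (flowN N γ t y) =
        surv N γ f y t * (Q₁ (flowN N γ t y) * h₁ (flowN N γ t y i1)) -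
          surv N γ f y t * (Q₂ (flowN N γ t y) * h₂ (flowN N γ t y i1)) := fun t => by
      rw [hLu, mul_sub]
    rw [← killedResolvent_killedGenerator hγ hf hf0 (hdiv y) hu huC
      ((hi₁.sub hi₂).congr_fun (fun t _ => (hsub t).symm) measurableSet_Ioi), killedResolvent,
      killedResolvent, killedResolvent, ← integral_sub hi₁ hi₂]
    simp only [hsub]
  rw [piH_eq_sum_integral_killedResolvent, piH_eq_sum_integral_killedResolvent,
    ← Finset.sum_sub_distrib, ← Finset.sum_neg_distrib]
  refine Finset.sum_congr rfl fun i _ => ?_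
  rw [← integral_sub
    (integrable_mul_killedResolvent_jmap hγ hb hB hf hf0 hfF hS hSfin hbS hc hm₁ hC₁ hφS₁ m
      (haij i))
    (integrable_mul_killedResolvent_jmap hγ hb hB hf hf0 hfF hS hSfin hbS hc hm₂ hC₂ hφS₂ m
      (haij i)), ← integral_neg]
  simp only [← mul_sub, hdynkin, mul_neg]

end Resolvent

/-! ### The observable `H · (g' / b̃)(·¹)` -/

theorem killedGenerator_mul_div {N : ℕ} {b p : ℝ → ℝ} {H : (Fin N → ℝ) → ℝ}
    (f : Fin N → ℝ → ℝ) (hH : Differentiable ℝ H) (hp : Differentiable ℝ p)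
    (hb : Differentiable ℝ b) (hsupp : tsupport p ⊆ {v | b v ≠ 0}) (i1 : Fin N)
    (z : Fin N → ℝ) :
    killedGenerator b f (fun z => H z * (p (z i1) / b (z i1))) z =
      H z * deriv p (z i1) -
        ((∑ i, f i (z i)) * H z - fderiv ℝ H z (fun j => b (z j)) + H z * deriv b (z i1)) /
          b (z i1) * p (z i1) := by
  have hφ := (hasDerivAt_div_of_tsupport_subset hp hb hsupp (z i1)).comp_hasFDerivAt z
    (hasFDerivAt_apply (𝕜 := ℝ) i1 z)
  have hu : HasFDerivAt (fun z => H z * (p (z i1) / b (z i1))) _ z := (hH z).hasFDerivAt.mul hφ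
  rw [killedGenerator, hu.fderiv]
  simp only [add_apply, smul_apply, ContinuousLinearMap.proj_apply, smul_eq_mul]
  by_cases hbz : b (z i1) = 0
  · have hz : z i1 ∉ tsupport p := fun h => hsupp h hbz
    rw [hbz, image_eq_zero_of_notMem_tsupport hz, deriv_eq_zero_of_notMem_tsupport hz]
    simp
  · field_simp
    ring

theorem abs_sum_mul_sub_fderiv_add_le {N : ℕ} {f : Fin N → ℝ → ℝ} {F : ℝ}
    (hfF : ∀ i v, |f i v| ≤ F) {H : (Fin N → ℝ) → ℝ} {cH cH' : ℝ} (hcH : ∀ z, |H z| ≤ cH)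
    (hcH' : ∀ z, ‖fderiv ℝ H z‖ ≤ cH') {b b' : ℝ → ℝ} {B : ℝ} (hB : ∀ v, |b v| ≤ B)
    (hB' : ∀ v, |b' v| ≤ B) (i1 : Fin N) (z : Fin N → ℝ) :
    |(∑ i, f i (z i)) * H z - fderiv ℝ H z (fun j => b (z j)) + H z * b' (z i1)| ≤
      N * F * cH + cH' * B + cH * B := by
  have hsum : |∑ i, f i (z i)| ≤ N * F :=
    calc |∑ i, f i (z i)| ≤ ∑ i, |f i (z i)| := Finset.abs_sum_le_sum_abs _ _
      _ ≤ ∑ _i : Fin N, F := Finset.sum_le_sum fun i _ => hfF i _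
      _ = N * F := by simp
  have h₁ : |(∑ i, f i (z i)) * H z| ≤ N * F * cH := by
    rw [abs_mul]
    exact mul_le_mul hsum (hcH z) (abs_nonneg _) ((abs_nonneg _).trans hsum)
  have h₂ : |fderiv ℝ H z (fun j => b (z j))| ≤ cH' * B :=
    ((fderiv ℝ H z).le_opNorm _).trans <| mul_le_mul (hcH' z)
      ((pi_norm_le_iff_of_nonneg ((abs_nonneg _).trans (hB 0))).2 fun j => hB (z j))
      (norm_nonneg _) ((norm_nonneg _).trans (hcH' z))
  have h₃ : |H z * b' (z i1)| ≤ cH * B := by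
    rw [abs_mul]
    exact mul_le_mul (hcH z) (hB' _) (abs_nonneg _) ((abs_nonneg _).trans (hcH z))
  calc _ ≤ |(∑ i, f i (z i)) * H z| + |fderiv ℝ H z (fun j => b (z j))| +
        |H z * b' (z i1)| := (abs_add_le _ _).trans (add_le_add_left (abs_sub _ _) _)
    _ ≤ N * F * cH + cH' * B + cH * B := by linarith

theorem piH_deriv_sub_piH_eq {N : ℕ} {b : ℝ → ℝ} {γ : ℝ → ℝ → ℝ} {B : ℝ}
    {f : Fin N → ℝ → ℝ} {F : ℝ} {aij : Fin N → Fin N → ℝ → ℝ} (hγ : IsFlow b γ)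
    (hb : Differentiable ℝ b) (hbB : ∀ v, |b v| ≤ B) (hbB' : ∀ v, |deriv b v| ≤ B)
    (hf : ∀ i, Continuous (f i)) (hf0 : ∀ i v, 0 ≤ f i v) (hfF : ∀ i v, |f i v| ≤ F)
    (hdiv : ∀ y : Fin N → ℝ, ∫⁻ s in Ioi (0 : ℝ), ENNReal.ofReal (∑ i, f i (γ s (y i))) = ⊤)
    (haij : ∀ i, Measurable (jmap N aij i)) (i1 : Fin N) (m : Measure (Fin N → ℝ))
    [IsFiniteMeasure m] {H : (Fin N → ℝ) → ℝ} (hH : ContDiff ℝ 1 H) {cH cH' : ℝ}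
    (hcH : ∀ z, |H z| ≤ cH) (hcH' : ∀ z, ‖fderiv ℝ H z‖ ≤ cH') {p : ℝ → ℝ}
    (hp : ContDiff ℝ 1 p) (hpc : HasCompactSupport p) (hpS : tsupport p ⊆ {v | b v ≠ 0}) :
    piH N γ f aij i1 m H (deriv p) -
        piH N γ f aij i1 m (fun x => ((∑ i, f i (x i)) * H x
          - fderiv ℝ H x (fun j => b (x j)) + H x * deriv b (x i1)) / b (x i1)) p =
      -∑ i, ∫ x, f i (x i) *
        (H (jmap N aij i x) * (p (jmap N aij i x i1) / b (jmap N aij i x i1))) ∂m := by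
  obtain ⟨c, hc, hbS⟩ := hpc.isCompact.exists_forall_le'
    (continuous_abs.comp hb.continuous).continuousOn fun v hv => abs_pos.2 (hpS hv)
  have hφ := hasDerivAt_div_of_tsupport_subset hp.differentiable_one hb hpS
  obtain ⟨Cφ, hCφ⟩ := hpc.exists_abs_div_le
    (continuous_div_of_tsupport_subset hp.differentiable_one hb hpS)
  obtain ⟨Cp', hCp'⟩ := hpc.deriv.exists_bound_of_continuous (hp.continuous_deriv le_rfl)
  have hcH0 : 0 ≤ cH := (abs_nonneg _).trans (hcH 0)
  have hu : Differentiable ℝ fun z : Fin N → ℝ => H z * (p (z i1) / b (z i1)) := fun z => by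
    have hφz := (hφ (z i1)).differentiableAt.comp z (differentiableAt_apply (𝕜 := ℝ) i1 z)
    exact (hH.differentiable_one z).mul hφz
  have hnum := abs_sum_mul_sub_fderiv_add_le hfF hcH hcH' hbB hbB' i1
  refine piH_sub_piH_eq_neg_sum_integral hγ (lipschitzWith_toNNReal_of_abs_deriv_le hb hbB')
    hbB hf hf0 hfF hdiv haij i1 m (isClosed_tsupport p).measurableSet
    hpc.isCompact.measure_lt_top.ne hbS hc (C₁ := cH * Cp')
    (C₂ := (N * F * cH + cH' * B + cH * B) * Cφ) (Cu := cH * Cφ) ?_ ?_ (fun z => ?_)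
    (fun z => ?_) (fun v hv => deriv_eq_zero_of_notMem_tsupport hv)
    (fun v hv => image_eq_zero_of_notMem_tsupport hv) hu (fun z => ?_)
    (killedGenerator_mul_div f hH.differentiable_one hp.differentiable_one hb hpS i1)
  · exact (hH.continuous.mul ((hp.continuous_deriv le_rfl).comp (continuous_apply i1))).measurable
  · have hHm : Measurable H := hH.continuous.measurable
    have hH'm : Measurable (fderiv ℝ H) := (hH.continuous_fderiv one_ne_zero).measurable
    have hfm : ∀ i, Measurable (f i) := fun i => (hf i).measurable
    have hbm : Measurable b := hb.continuous.measurable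
    have hpm : Measurable p := hp.continuous.measurable
    fun_prop
  · rw [abs_mul]
    exact mul_le_mul (hcH z) (hCp' _) (abs_nonneg _) hcH0
  · rw [div_mul_eq_mul_div, mul_div_assoc, abs_mul]
    exact mul_le_mul (hnum z) (hCφ _) (abs_nonneg _) ((abs_nonneg _).trans (hnum z))
  · rw [abs_mul]
    exact mul_le_mul (hcH z) (hCφ _) (abs_nonneg _) hcH0

theorem integral_jump_eq_piH {N : ℕ} {γ : ℝ → ℝ → ℝ} {f : Fin N → ℝ → ℝ} {F : ℝ}
    {aij : Fin N → Fin N → ℝ → ℝ} {m : Measure (Fin N → ℝ)}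
    (hrep : ∀ g : (Fin N → ℝ) → ℝ, Measurable g → (∃ C, ∀ x, |g x| ≤ C) →
      ∫ x, g x ∂m = ∑ i, ∫ x, (f i (x i) * ∫ t in Ioi (0:ℝ),
        surv N γ f (jmap N aij i x) t * g (flowN N γ t (jmap N aij i x))) ∂m)
    (hf : ∀ i, Continuous (f i)) (hfF : ∀ i v, |f i v| ≤ F) {H : (Fin N → ℝ) → ℝ}
    (hH : Continuous H) {cH : ℝ} (hcH : ∀ z, |H z| ≤ cH) {b g : ℝ → ℝ}
    (hb : Differentiable ℝ b) (hg : Differentiable ℝ g) (hp : Differentiable ℝ (deriv g))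
    (hpc : HasCompactSupport (deriv g)) (hpS : tsupport (deriv g) ⊆ {v | b v ≠ 0})
    {i i1 : Fin N} (hne : i1 ≠ i) (hjmap : Continuous (jmap N aij i))
    (ha : Differentiable ℝ (aij i i1)) (hΔ' : ∀ v, deriv (fun w => w + aij i i1 w) v ≠ 0) :
    ∫ x, f i (x i) * (H (jmap N aij i x) *
        (deriv g (jmap N aij i x i1) / b (jmap N aij i x i1))) ∂m =
      piH N γ f aij i1 m (fun x => f i (x i) * H (jmap N aij i x) /
          (b (x i1 + aij i i1 (x i1)) * deriv (fun w => w + aij i i1 w) (x i1)))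
        (deriv (fun v => g (v + aij i i1 v))) := by
  have hφc := continuous_div_of_tsupport_subset hp hb hpS
  obtain ⟨Cφ, hCφ⟩ := hpc.exists_abs_div_le hφc
  have hψ : Measurable fun x => f i (x i) * (H (jmap N aij i x) *
      (deriv g (jmap N aij i x i1) / b (jmap N aij i x i1))) :=
    (((hf i).comp (continuous_apply i)).mul ((hH.comp hjmap).mul
      (hφc.comp ((continuous_apply i1).comp hjmap)))).measurable
  have hψC : ∀ x, |f i (x i) * (H (jmap N aij i x) *
      (deriv g (jmap N aij i x i1) / b (jmap N aij i x i1)))| ≤ F * (cH * Cφ) := fun x => by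
    rw [abs_mul, abs_mul]
    exact mul_le_mul (hfF i _) (mul_le_mul (hcH _) (hCφ _) (abs_nonneg _)
      ((abs_nonneg _).trans (hcH 0))) (by positivity) ((abs_nonneg _).trans (hfF i 0))
  have hchain : ∀ z : Fin N → ℝ, f i (z i) * H (jmap N aij i z) /
      (b (z i1 + aij i i1 (z i1)) * deriv (fun w => w + aij i i1 w) (z i1)) *
        deriv (fun v => g (v + aij i i1 v)) (z i1) =
      f i (z i) * (H (jmap N aij i z) * (deriv g (jmap N aij i z i1) / b (jmap N aij i z i1))) :=
    fun z => by
      rw [jmap_of_ne aij hne]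
      exact (div_mul_deriv_comp (hg _) (differentiableAt_id.add (ha _)) (hΔ' _) _).trans
        (mul_assoc _ _ _)
  rw [hrep _ hψ ⟨_, hψC⟩, piH_eq_sum_integral_killedResolvent]
  simp only [hchain]
  rfl

theorem integration_by_parts_marginal_general
    (N k : ℕ) (hN : 1 ≤ N) (F B a : ℝ)
    (ha : 0 < a)
    (btilde : ℝ → ℝ) (hbC : ContDiff ℝ (k + 1 : ℕ) btilde)
    (hbB : ∀ l ≤ k + 1, ∀ v : ℝ, |iteratedDeriv l btilde v| ≤ B)
    (γt : ℝ → ℝ → ℝ) (hγ0 : ∀ v : ℝ, γt 0 v = v)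
    (hγ : ∀ (v t : ℝ), 0 ≤ t → HasDerivAt (fun s => γt s v) (btilde (γt t v)) t)
    (f : Fin N → ℝ → ℝ) (hfpos : ∀ i v, 0 < f i v)
    (hfC : ∀ i, ContDiff ℝ (k : ℕ) (f i))
    (hfF : ∀ i, ∀ l ≤ k, ∀ v : ℝ, |iteratedDeriv l (f i) v| ≤ F)
    (aij : Fin N → Fin N → ℝ → ℝ)
    (haC : ∀ i j, i ≠ j → ContDiff ℝ (⊤ : ℕ∞) (aij i j))
    (haInv : ∀ i j, i ≠ j → ∀ v : ℝ, a ≤ |deriv (fun w => w + aij i j w) v|)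
    (hdiv : ∀ x : Fin N → ℝ,
      (∫⁻ s in Ioi (0:ℝ), ENNReal.ofReal (∑ i, f i (γt s (x i)))) = ⊤)
    (m : Measure (Fin N → ℝ)) [IsProbabilityMeasure m]
    (hrep : ∀ g : (Fin N → ℝ) → ℝ, Measurable g → (∃ C, ∀ x, |g x| ≤ C) →
      ∫ x, g x ∂m
        = ∑ i, ∫ x, (f i (x i) *
            ∫ t in Ioi (0:ℝ),
              surv N γt f (jmap N aij i x) t * g (flowN N γt t (jmap N aij i x))) ∂m)
    (H : (Fin N → ℝ) → ℝ) (hH : ContDiff ℝ 1 H)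
    (hHbdd : ∃ c : ℝ, ∀ x, |H x| ≤ c)
    (hHgrad : ∃ c : ℝ, ∀ x, ‖fderiv ℝ H x‖ ≤ c) :
    ∀ g : ℝ → ℝ, ContDiff ℝ (⊤ : ℕ∞) g → HasCompactSupport g →
      (∃ δ : ℝ, 0 < δ ∧ ∀ v : ℝ, |v| < δ → g v = 0) →
      tsupport g ⊆ {v : ℝ | btilde v ≠ 0} →
      piH N γt f aij ⟨0, hN⟩ m H (deriv (deriv g))
        = piH N γt f aij ⟨0, hN⟩ m
            (fun x => ((∑ i, f i (x i)) * H x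
                - fderiv ℝ H x (fun j => btilde (x j))
                + H x * deriv btilde (x ⟨0, hN⟩)) / btilde (x ⟨0, hN⟩))
            (deriv g)
          - ∑ i ∈ Finset.univ.erase (⟨0, hN⟩ : Fin N),
              piH N γt f aij ⟨0, hN⟩ m
                (fun x => f i (x i) * H (jmap N aij i x) /
                  (btilde (x ⟨0, hN⟩ + aij i ⟨0, hN⟩ (x ⟨0, hN⟩)) *
                    deriv (fun w => w + aij i ⟨0, hN⟩ w) (x ⟨0, hN⟩)))
                (deriv (fun v => g (v + aij i ⟨0, hN⟩ v))) := by
  intro g hg hgc ⟨δ, hδ, hgδ⟩ hsupp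
  set i1 : Fin N := ⟨0, hN⟩
  have hbd : Differentiable ℝ btilde := hbC.differentiable (by simp)
  have hp : ContDiff ℝ 1 (deriv g) :=
    (contDiff_infty_iff_deriv.1 hg).2.of_le (by exact_mod_cast le_top)
  have hpS : tsupport (deriv g) ⊆ {v | btilde v ≠ 0} := tsupport_deriv_subset.trans hsupp
  obtain ⟨cH, hcH⟩ := hHbdd
  have hf : ∀ i, Continuous (f i) := fun i => (hfC i).continuous
  have hfF0 : ∀ i v, |f i v| ≤ F := fun i v => by simpa using hfF i 0 (Nat.zero_le k) v
  have hjmap : ∀ i, Continuous (jmap N aij i) := fun i =>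
    continuous_jmap fun j hj => (haC i j hj.symm).continuous
  have key := piH_deriv_sub_piH_eq (γ := γt) ⟨hγ0, hγ⟩ hbd
    (fun v => by simpa using hbB 0 (Nat.zero_le _) v) (fun v => by simpa using hbB 1 (by omega) v)
    hf (fun i v => (hfpos i v).le) hfF0 hdiv (fun i => (hjmap i).measurable) i1 m hH hcH
    hHgrad.choose_spec hp hgc.deriv hpS
  have hg'0 : deriv g 0 = 0 := by
    have hg0 : g =ᶠ[𝓝 0] fun _ => 0 := eventually_of_mem (Metric.ball_mem_nhds 0 hδ)
      fun v hv => hgδ v (by simpa using hv)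
    rw [hg0.deriv_eq, deriv_const]
  rw [sub_eq_iff_eq_add', ← Finset.add_sum_erase _ _ (Finset.mem_univ i1)] at key
  rw [key, Finset.sum_congr rfl fun i hi => integral_jump_eq_piH hrep hf hfF0 hH.continuous hcH
    hbd (hg.differentiable (by simp)) hp.differentiable_one hgc.deriv hpS
    (Finset.ne_of_mem_erase hi).symm (hjmap i)
    ((haC i i1 (Finset.ne_of_mem_erase hi)).differentiable (by simp))
    fun v => abs_pos.1 (ha.trans_le (haInv i i1 (Finset.ne_of_mem_erase hi) v))]
  simp only [jmap_self, hg'0, zero_div, mul_zero, integral_zero]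
  ring

/-- the integration-by-parts identity
`π_H(g'') = π_{G(H)}(g') − Σ_{i=2}^N π_{G_i(H)}((g ∘ Δ_i^1)')`
for every `g ∈ C_c^∞(ℝ)` vanishing near `0` with support in `{b̃ ≠ 0}`. -/
theorem integration_by_parts_marginal
    (N k : ℕ) (hN : 1 ≤ N) (F B A a : ℝ)
    (hF : 0 < F) (hB : 0 < B) (hA : 0 < A) (ha : 0 < a)
    (btilde : ℝ → ℝ) (hbC : ContDiff ℝ (k + 1 : ℕ) btilde)
    (hbB : ∀ l ≤ k + 1, ∀ v : ℝ, |iteratedDeriv l btilde v| ≤ B)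
    (γt : ℝ → ℝ → ℝ) (hγ0 : ∀ v : ℝ, γt 0 v = v)
    (hγ : ∀ (v t : ℝ), 0 ≤ t → HasDerivAt (fun s => γt s v) (btilde (γt t v)) t)
    (f : Fin N → ℝ → ℝ) (hfpos : ∀ i v, 0 < f i v)
    (hfLip : ∀ i, ∃ L : NNReal, LipschitzWith L (f i))
    (hfC : ∀ i, ContDiff ℝ (k : ℕ) (f i))
    (hfF : ∀ i, ∀ l ≤ k, ∀ v : ℝ, |iteratedDeriv l (f i) v| ≤ F)
    (aij : Fin N → Fin N → ℝ → ℝ)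
    (haC : ∀ i j, i ≠ j → ContDiff ℝ (⊤ : ℕ∞) (aij i j))
    (haA : ∀ i j, i ≠ j → ∀ (l : ℕ) (v : ℝ), |iteratedDeriv l (aij i j) v| ≤ A)
    (haInv : ∀ i j, i ≠ j → ∀ v : ℝ, a ≤ |deriv (fun w => w + aij i j w) v|)
    (hdiv : ∀ x : Fin N → ℝ,
      (∫⁻ s in Ioi (0:ℝ), ENNReal.ofReal (∑ i, f i (γt s (x i)))) = ⊤)
    (m : Measure (Fin N → ℝ)) [IsProbabilityMeasure m]
    (hrep : ∀ g : (Fin N → ℝ) → ℝ, Measurable g → (∃ C, ∀ x, |g x| ≤ C) →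
      ∫ x, g x ∂m
        = ∑ i, ∫ x, (f i (x i) *
            ∫ t in Ioi (0:ℝ),
              surv N γt f (jmap N aij i x) t * g (flowN N γt t (jmap N aij i x))) ∂m)
    (H : (Fin N → ℝ) → ℝ) (hH : ContDiff ℝ 1 H)
    (hHbdd : ∃ c : ℝ, ∀ x, |H x| ≤ c)
    (hHgrad : ∃ c : ℝ, ∀ x, ‖fderiv ℝ H x‖ ≤ c) :
    ∀ g : ℝ → ℝ, ContDiff ℝ (⊤ : ℕ∞) g → HasCompactSupport g →
      (∃ δ : ℝ, 0 < δ ∧ ∀ v : ℝ, |v| < δ → g v = 0) →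
      tsupport g ⊆ {v : ℝ | btilde v ≠ 0} →
      piH N γt f aij ⟨0, hN⟩ m H (deriv (deriv g))
        = piH N γt f aij ⟨0, hN⟩ m
            (fun x => ((∑ i, f i (x i)) * H x
                - fderiv ℝ H x (fun j => btilde (x j))
                + H x * deriv btilde (x ⟨0, hN⟩)) / btilde (x ⟨0, hN⟩))
            (deriv g)
          - ∑ i ∈ Finset.univ.erase (⟨0, hN⟩ : Fin N),
              piH N γt f aij ⟨0, hN⟩ m
                (fun x => f i (x i) * H (jmap N aij i x) /
                  (btilde (x ⟨0, hN⟩ + aij i ⟨0, hN⟩ (x ⟨0, hN⟩)) *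
                    deriv (fun w => w + aij i ⟨0, hN⟩ w) (x ⟨0, hN⟩)))
                (deriv (fun v => g (v + aij i ⟨0, hN⟩ v))) :=
  integration_by_parts_marginal_general N k hN F B a ha btilde hbC hbB γt hγ0 hγ f hfpos hfC hfF aij
    haC haInv hdiv m hrep H hH hHbdd hHgrad
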